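/- arXiv:0910.3569 — 3 statements merged into one kernel-verified Lean document; each statement's English description precedes it below -/
import Mathlib

section
/- Let k be an algebraically closed field of characteristic zero, let d, s ∈ ℕ, let I ⊆ k[x_0,…,x_n] be a homogeneous ideal, and let W ⊆ k^{n+1} be a nonzero linear subspace with vanishing ideal J = I(W). If dim (I)_d = s and dim (I ∩ J)_d = 0, then there exist s one-dimensional linear subspaces P_1,…,P_s ⊆ W (points of the projective linear space corresponding to W) such that dim (I ∩ I(P_1) ∩ ⋯ ∩ I(P_s))_d = 0. -/
open MvPolynomial

noncomputable def vanIdeal (k : Type) [Field k] (N : ℕ) (V : Set (Fin N → k)) :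
    Ideal (MvPolynomial (Fin N) k) where
  carrier := {f | ∀ v ∈ V, MvPolynomial.eval v f = 0}
  add_mem' := by
    intro f g hf hg v hv
    simp only [Set.mem_setOf_eq] at *
    simp [map_add, hf v hv, hg v hv]
  zero_mem' := by
    intro v hv
    simp
  smul_mem' := by
    intro c f hf v hv
    simp only [Set.mem_setOf_eq] at *
    simp [smul_eq_mul, hf v hv]

noncomputable def hdim (k : Type) [Field k] (N : ℕ)
    (I : Ideal (MvPolynomial (Fin N) k)) (d : ℕ) : ℕ :=
  Module.finrank k
    ↥(Submodule.restrictScalars k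
        (I : Submodule (MvPolynomial (Fin N) k) (MvPolynomial (Fin N) k))
      ⊓ MvPolynomial.homogeneousSubmodule (Fin N) k d)

/-!
Each point of `W` at which some nonzero form of `(I)_d` does not vanish cuts the
dimension of the degree-`d` part down by at least one, and `(I ∩ I(W))_d = 0` says that
every nonzero form of `(I)_d` has such a point. So `s` well-chosen points (with repetitions
once the dimension has dropped to zero) kill `(I)_d`.
-/

section DegreePart

variable {σ k : Type} [Field k]

noncomputable def degreePart (I : Ideal (MvPolynomial σ k)) (d : ℕ) :
    Submodule k (MvPolynomial σ k) :=
  Submodule.restrictScalars k (I : Submodule (MvPolynomial σ k) (MvPolynomial σ k))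
    ⊓ homogeneousSubmodule σ k d

theorem degreePart_mono {I J : Ideal (MvPolynomial σ k)} (h : I ≤ J) (d : ℕ) :
    degreePart I d ≤ degreePart J d :=
  inf_le_inf_right _ h

instance [Finite σ] (d : ℕ) : FiniteDimensional k (homogeneousSubmodule σ k d) :=
  Submodule.finiteDimensional_of_le (S₂ := restrictTotalDegree σ k d) fun _ hf =>
    (mem_restrictTotalDegree σ d _).mpr ((mem_homogeneousSubmodule d _).mp hf).totalDegree_le

instance [Finite σ] (I : Ideal (MvPolynomial σ k)) (d : ℕ) :
    FiniteDimensional k (degreePart I d) :=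
  Submodule.finiteDimensional_of_le (inf_le_right : degreePart I d ≤ _)

end DegreePart

section Lines

variable {k : Type} [Field k] {N d : ℕ}

theorem hdim_eq_finrank_degreePart (I : Ideal (MvPolynomial (Fin N) k)) (d : ℕ) :
    hdim k N I d = Module.finrank k (degreePart I d) :=
  rfl

theorem hdim_eq_zero_iff {I : Ideal (MvPolynomial (Fin N) k)} :
    hdim k N I d = 0 ↔ degreePart I d = ⊥ :=
  Submodule.finrank_eq_zero

theorem hdim_eq_zero_of_le {I J : Ideal (MvPolynomial (Fin N) k)} (h : I ≤ J)
    (hJ : hdim k N J d = 0) : hdim k N I d = 0 :=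
  hdim_eq_zero_iff.mpr (eq_bot_iff.mpr ((degreePart_mono h d).trans (hdim_eq_zero_iff.mp hJ).le))

theorem exists_line_le_and_mem {V : Type} [AddCommGroup V] [Module k V] {W : Submodule k V}
    (hW : W ≠ ⊥) {w : V} (hw : w ∈ W) :
    ∃ L : Submodule k V, Module.finrank k L = 1 ∧ L ≤ W ∧ w ∈ L := by
  obtain ⟨u, huW, hu⟩ : ∃ u ∈ W, u ≠ 0 ∧ w ∈ k ∙ u := by
    rcases eq_or_ne w 0 with rfl | hw0
    · obtain ⟨u, huW, hu⟩ := (Submodule.ne_bot_iff W).mp hW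
      exact ⟨u, huW, hu, Submodule.zero_mem _⟩
    · exact ⟨w, hw, hw0, Submodule.mem_span_singleton_self w⟩
  exact ⟨k ∙ u, finrank_span_singleton hu.1, (Submodule.span_singleton_le_iff_mem _ _).mpr huW,
    hu.2⟩

theorem degreePart_inf_vanIdeal_lt {I : Ideal (MvPolynomial (Fin N) k)} {V : Set (Fin N → k)}
    {f : MvPolynomial (Fin N) k} (hf : f ∈ degreePart I d) {v : Fin N → k} (hv : v ∈ V)
    (hfv : eval v f ≠ 0) : degreePart (I ⊓ vanIdeal k N V) d < degreePart I d :=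
  lt_of_le_of_ne (degreePart_mono inf_le_left d) fun h =>
    hfv ((h ▸ hf : f ∈ degreePart (I ⊓ vanIdeal k N V) d).1.2 v hv)

theorem exists_line_hdim_inf_vanIdeal_le {W : Submodule k (Fin N → k)} (hW : W ≠ ⊥)
    {I : Ideal (MvPolynomial (Fin N) k)} (hIW : hdim k N (I ⊓ vanIdeal k N W) d = 0) {m : ℕ}
    (hI : hdim k N I d ≤ m + 1) :
    ∃ L : Submodule k (Fin N → k), (Module.finrank k L = 1 ∧ L ≤ W) ∧
      hdim k N (I ⊓ vanIdeal k N L) d ≤ m := by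
  by_cases hzero : degreePart I d = ⊥
  · obtain ⟨L, hL, hLW, -⟩ := exists_line_le_and_mem hW W.zero_mem
    exact ⟨L, ⟨hL, hLW⟩,
      (hdim_eq_zero_of_le inf_le_left (hdim_eq_zero_iff.mpr hzero)).trans_le m.zero_le⟩
  obtain ⟨f, hf, hf0⟩ := (Submodule.ne_bot_iff _).mp hzero
  obtain ⟨w, hwW, hfw⟩ : ∃ w ∈ W, eval w f ≠ 0 := by
    by_contra! hvan
    exact hf0 ((Submodule.eq_bot_iff _).mp (hdim_eq_zero_iff.mp hIW) f ⟨⟨hf.1, hvan⟩, hf.2⟩)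
  obtain ⟨L, hL, hLW, hwL⟩ := exists_line_le_and_mem hW hwW
  have hlt := Submodule.finrank_lt_finrank_of_lt (degreePart_inf_vanIdeal_lt hf hwL hfw)
  exact ⟨L, ⟨hL, hLW⟩, by rw [hdim_eq_finrank_degreePart] at hI ⊢; omega⟩

theorem exists_lines_hdim_inf_iInf_vanIdeal_eq_zero {W : Submodule k (Fin N → k)} (hW : W ≠ ⊥)
    (m : ℕ) {I : Ideal (MvPolynomial (Fin N) k)} (hIW : hdim k N (I ⊓ vanIdeal k N W) d = 0)
    (hI : hdim k N I d ≤ m) :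
    ∃ P : Fin m → Submodule k (Fin N → k), (∀ i, Module.finrank k (P i) = 1 ∧ P i ≤ W) ∧
      hdim k N (I ⊓ ⨅ i, vanIdeal k N (P i)) d = 0 := by
  induction m generalizing I with
  | zero =>
    exact ⟨Fin.elim0, fun i => i.elim0, hdim_eq_zero_of_le inf_le_left (Nat.le_zero.mp hI)⟩
  | succ m ih =>
    obtain ⟨L, hL, hIL⟩ := exists_line_hdim_inf_vanIdeal_le hW hIW hI
    obtain ⟨P, hP, hIP⟩ :=
      ih (hdim_eq_zero_of_le (inf_le_inf_right _ inf_le_left) hIW) hIL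
    let Q : Fin (m + 1) → Submodule k (Fin N → k) := Fin.cons L P
    have hQ : ⨅ i, vanIdeal k N (Q i) ≤ vanIdeal k N L ⊓ ⨅ j, vanIdeal k N (P j) :=
      le_inf (iInf_le _ 0) (le_iInf fun j => iInf_le (fun i => vanIdeal k N (Q i)) j.succ)
    refine ⟨Q, Fin.cases hL hP, hdim_eq_zero_of_le ?_ hIP⟩
    rw [inf_assoc]
    exact inf_le_inf_left I hQ

end Lines

theorem stmt3_general (k : Type) [Field k]
    (n d s : ℕ) (I : Ideal (MvPolynomial (Fin (n+1)) k))
    (W : Submodule k (Fin (n+1) → k)) (hW : W ≠ ⊥)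
    (h1 : hdim k (n+1) I d = s)
    (h2 : hdim k (n+1) (I ⊓ vanIdeal k (n+1) ↑W) d = 0) :
    ∃ P : Fin s → Submodule k (Fin (n+1) → k),
      (∀ i, Module.finrank k (P i) = 1 ∧ P i ≤ W) ∧
      hdim k (n+1) (I ⊓ ⨅ i, vanIdeal k (n+1) ↑(P i)) d = 0 :=
  exists_lines_hdim_inf_iInf_vanIdeal_eq_zero hW s h2 h1.le

/-- Adding to a scheme generic points on a linear space `W` imposes independent
conditions on the degree-`d` part of a homogeneous ideal `I`, provided
`dim (I)_d = s` and `dim (I ∩ I(W))_d = 0`. -/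
theorem stmt3 (k : Type) [Field k] [IsAlgClosed k] [CharZero k]
    (n d s : ℕ) (I : Ideal (MvPolynomial (Fin (n+1)) k))
    (hIhom : ∀ f ∈ I, ∀ e : ℕ, MvPolynomial.homogeneousComponent e f ∈ I)
    (W : Submodule k (Fin (n+1) → k)) (hW : W ≠ ⊥)
    (h1 : hdim k (n+1) I d = s)
    (h2 : hdim k (n+1) (I ⊓ vanIdeal k (n+1) ↑W) d = 0) :
    ∃ P : Fin s → Submodule k (Fin (n+1) → k),
      (∀ i, Module.finrank k (P i) = 1 ∧ P i ≤ W) ∧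
      hdim k (n+1) (I ⊓ ⨅ i, vanIdeal k (n+1) ↑(P i)) d = 0 :=
  stmt3_general k n d s I W hW h1 h2
end

section
/- Let k be a field and n ≥ m+2 ≥ 3. Set J = (x_{m+3},…,x_n) ⊆ k[x_0,…,x_n]. Then (x_1,…,x_{m+1})·(x_{m+1},x_{m+2}) + J = ((x_1,…,x_{m+1}) + J) ∩ ((x_{m+1},x_{m+2}) + J) ∩ ((x_1,…,x_{m+2})^2 + J). (The three ideals on the right are, respectively, the ideal of a line L through the point P = [1:0:⋯:0], the ideal of an m-plane Π meeting L exactly in P, and the ideal of the double point 2P restricted to the linear span of L and Π; so the left-hand side is the ideal of the (m+2)-dimensional sundial L + Π + 2P|_{<L,Π>}.) -/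
/-!
All ideals involved are spanned by monomials, and `p` lies in such an ideal iff every exponent
vector of its support lies in the upper closure of the generating exponents. So sums, products and
intersections become unions, sumsets and intersections of upper sets in `σ →₀ ℕ`, and the identity
holds for any sets of variables `A`, `B`, `J`: a monomial divisible by some `x_a` (`a ∈ A`), by some
`x_b` (`b ∈ B`) and by a quadratic monomial in `A ∪ B` is divisible by some `x_a x_b`. The only
delicate case is `a = b ∈ A ∩ B`, where the quadratic monomial supplies the second factor.
-/

open MvPolynomial

namespace Finsupp

variable {σ : Type*}

theorem single_add_single_le_of_ne {a b : σ} {d : σ →₀ ℕ} (hab : a ≠ b) (ha : 1 ≤ d a)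
    (hb : 1 ≤ d b) : single a 1 + single b 1 ≤ d := by
  intro i
  by_cases hia : a = i <;> by_cases hib : b = i <;> simp_all

theorem upperClosure_image2_add_single (A B : Set σ) :
    upperClosure (Set.image2 (· + ·) ((single · 1) '' A) ((single · 1) '' B)) =
      upperClosure ((single · 1) '' A) ⊔ upperClosure ((single · 1) '' B) ⊔
        upperClosure (Set.image2 (· + ·) ((single · 1) '' (A ∪ B)) ((single · 1) '' (A ∪ B))) := by
  ext d
  simp only [UpperSet.coe_sup, Set.mem_inter_iff, SetLike.mem_coe, mem_upperClosure,
    Set.exists_mem_image2, Set.exists_mem_image, single_le_iff]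
  constructor
  · rintro ⟨a, ha, b, hb, hd⟩
    exact ⟨⟨⟨a, ha, single_le_iff.mp (le_self_add.trans hd)⟩,
      ⟨b, hb, single_le_iff.mp (le_add_self.trans hd)⟩⟩, a, .inl ha, b, .inr hb, hd⟩
  · rintro ⟨⟨⟨a, ha, hda⟩, b, hb, hdb⟩, c, hc, c', hc', hd⟩
    obtain rfl | hab := eq_or_ne a b
    · obtain ⟨e, he, hae⟩ : ∃ e ∈ A ∪ B, single a 1 + single e 1 ≤ d := by
        obtain rfl | hca := eq_or_ne c a
        · exact ⟨c', hc', hd⟩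
        · exact ⟨c, hc, single_add_single_le_of_ne hca.symm hda
            (single_le_iff.mp (le_self_add.trans hd))⟩
      rcases he with he | he
      · exact ⟨e, he, a, hb, add_comm (single a 1) _ ▸ hae⟩
      · exact ⟨a, ha, e, he, hae⟩
    · exact ⟨a, ha, b, hb, single_add_single_le_of_ne hab hda hdb⟩

end Finsupp

namespace MvPolynomial

variable {σ R : Type*} [CommSemiring R]

theorem span_X_image_eq_span_monomial_image (s : Set σ) :
    Ideal.span (X '' s : Set (MvPolynomial σ R)) =
      Ideal.span ((monomial · (1 : R)) '' ((Finsupp.single · 1) '' s)) := by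
  rw [Set.image_image]
  rfl

theorem span_monomial_image_mul_span_monomial_image (S T : Set (σ →₀ ℕ)) :
    Ideal.span ((monomial · (1 : R)) '' S) * Ideal.span ((monomial · (1 : R)) '' T) =
      Ideal.span ((monomial · (1 : R)) '' Set.image2 (· + ·) S T) := by
  rw [Ideal.span_mul_span', ← Set.image2_mul, Set.image2_image_left, Set.image2_image_right,
    Set.image_image2]
  simp only [monomial_mul, mul_one]

theorem span_monomial_image_add_span_monomial_image (S T : Set (σ →₀ ℕ)) :
    Ideal.span ((monomial · (1 : R)) '' S) + Ideal.span ((monomial · (1 : R)) '' T) =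
      Ideal.span ((monomial · (1 : R)) '' (S ∪ T)) := by
  rw [Set.image_union, Ideal.span_union, Ideal.add_eq_sup]

theorem span_X_mul_span_X_add_eq_inf (A B J : Set σ) :
    Ideal.span (X '' A : Set (MvPolynomial σ R)) * Ideal.span (X '' B) + Ideal.span (X '' J) =
      (Ideal.span (X '' A) + Ideal.span (X '' J)) ⊓ (Ideal.span (X '' B) + Ideal.span (X '' J)) ⊓
        (Ideal.span (X '' (A ∪ B)) ^ 2 + Ideal.span (X '' J)) := by
  simp only [sq, span_X_image_eq_span_monomial_image, span_monomial_image_mul_span_monomial_image,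
    span_monomial_image_add_span_monomial_image]
  ext p
  simp only [Ideal.mem_inf, mem_ideal_span_monomial_image, ← forall_and]
  refine forall₂_congr fun d _ => ?_
  simp only [← mem_upperClosure, upperClosure_union]
  rw [Finsupp.upperClosure_image2_add_single]
  simp only [UpperSet.mem_inf_iff, UpperSet.mem_sup_iff]
  tauto

end MvPolynomial

/-- The ideal of the `(m+2)`-dimensional sundial decomposes as the intersection of
the ideal of a line, the ideal of an `m`-plane, and the ideal of a double point
restricted to their span. -/
theorem stmt5 (k : Type) [Field k] (n m : ℕ) (hn : m + 2 ≤ n) :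
    (Ideal.span (MvPolynomial.X '' {i : Fin (n+1) | 1 ≤ (i : ℕ) ∧ (i : ℕ) ≤ m + 1})
          : Ideal (MvPolynomial (Fin (n+1)) k))
        * Ideal.span {MvPolynomial.X (⟨m+1, by omega⟩ : Fin (n+1)),
            MvPolynomial.X (⟨m+2, by omega⟩ : Fin (n+1))}
      + Ideal.span (MvPolynomial.X '' {i : Fin (n+1) | m + 3 ≤ (i : ℕ)})
    = (Ideal.span (MvPolynomial.X '' {i : Fin (n+1) | 1 ≤ (i : ℕ) ∧ (i : ℕ) ≤ m + 1})
        + Ideal.span (MvPolynomial.X '' {i : Fin (n+1) | m + 3 ≤ (i : ℕ)}))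
      ⊓ (Ideal.span {MvPolynomial.X (⟨m+1, by omega⟩ : Fin (n+1)),
            MvPolynomial.X (⟨m+2, by omega⟩ : Fin (n+1))}
        + Ideal.span (MvPolynomial.X '' {i : Fin (n+1) | m + 3 ≤ (i : ℕ)}))
      ⊓ ((Ideal.span (MvPolynomial.X '' {i : Fin (n+1) | 1 ≤ (i : ℕ) ∧ (i : ℕ) ≤ m + 2})) ^ 2
        + Ideal.span (MvPolynomial.X '' {i : Fin (n+1) | m + 3 ≤ (i : ℕ)})) := by
  have hunion : {i : Fin (n+1) | 1 ≤ (i : ℕ) ∧ (i : ℕ) ≤ m + 2} =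
      {i : Fin (n+1) | 1 ≤ (i : ℕ) ∧ (i : ℕ) ≤ m + 1} ∪ {⟨m+1, by omega⟩, ⟨m+2, by omega⟩} := by
    ext i
    simp only [Set.mem_ofPred_eq, Set.mem_union, Set.mem_insert_iff, Set.mem_singleton_iff,
      Fin.ext_iff]
    omega
  rw [← Set.image_pair, hunion]
  exact span_X_mul_span_X_add_eq_inf _ _ _
end

section
/- Let k be a field, n ≥ m+2 ≥ 3, and let I_{X_0} = (x_1,…,x_{m+1})·(x_{m+1},x_{m+2}) + (x_{m+3},…,x_n) ⊆ R = k[x_0,…,x_n] be the ideal of the (m+2)-dimensional sundial. Then for every integer d ≥ 1 one has dim_k (R/I_{X_0})_d = C(d+m,m) + d + 1; equivalently dim_k (I_{X_0})_d = C(d+n,n) − C(d+m,m) − (d+1). (Thus the sundial, being a flat degeneration of the disjoint union of a line and an m-plane, imposes the same number of conditions on forms of each degree d ≥ 1 as that disjoint union; for m = 1 this number is 2d+2.) -/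
open MvPolynomial

/-!
The sundial ideal is a monomial ideal, so in each degree the monomials outside it form a basis
of the quotient and the monomials inside it a basis of the ideal. A monomial of degree `d ≥ 1`
avoids all generators `x_i x_{m+1}`, `x_i x_{m+2}` (`1 ≤ i ≤ m+1`) and `x_j` (`j ≥ m+3`) exactly
when it is a monomial in `x_0, …, x_m`, or `x_0^{d-1} x_{m+1}`, or `x_0^{d-j} x_{m+2}^j` with
`1 ≤ j ≤ d`: there are `C(d+m,m) + 1 + d` of these, out of `C(d+n,n)` monomials of degree `d`.
-/

open Finset Module Pointwise

theorem LinearMap.finrank_map_add_finrank_ker_inf {K V W : Type*} [Field K] [AddCommGroup V]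
    [Module K V] [AddCommGroup W] [Module K W] (f : V →ₗ[K] W) (p : Submodule K V)
    [FiniteDimensional K p] :
    finrank K (p.map f) + finrank K ↥(LinearMap.ker f ⊓ p) = finrank K p := by
  rw [← (f.domRestrict p).finrank_range_add_finrank_ker, LinearMap.range_domRestrict,
    LinearMap.ker_domRestrict, ← Submodule.finrank_map_subtype_eq, Submodule.map_comap_subtype,
    inf_comm]

theorem Ideal.Quotient.ker_mkₐ_toLinearMap {R A : Type*} [CommSemiring R] [CommRing A]
    [Algebra R A] (I : Ideal A) :
    LinearMap.ker (Ideal.Quotient.mkₐ R I).toLinearMap = Submodule.restrictScalars R I := by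
  ext x
  simp [Ideal.Quotient.eq_zero_iff_mem]

theorem Finsupp.single_add_single_le_iff {ι : Type*} {i j : ι} (hij : i ≠ j) {σ : ι →₀ ℕ} :
    single i 1 + single j 1 ≤ σ ↔ 1 ≤ σ i ∧ 1 ≤ σ j := by
  refine ⟨fun h => ⟨by simpa [hij] using h i, by simpa [hij] using h j⟩, fun ⟨hi, hj⟩ w => ?_⟩
  by_cases hw : w = i
  · subst hw; simpa [hij]
  · by_cases hw' : w = j
    · subst hw'; simpa [Ne.symm hij]
    · simp [Ne.symm hw, Ne.symm hw']

theorem Finsupp.eq_single_add_single {ι : Type*} {u v : ι} (huv : u ≠ v) {σ : ι →₀ ℕ}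
    (h : ∀ w, w ≠ u → w ≠ v → σ w = 0) : σ = single u (σ u) + single v (σ v) := by
  ext w
  by_cases hu : w = u
  · subst hu; simp [huv]
  · by_cases hv : w = v
    · subst hv; simp [Ne.symm huv]
    · simp [Ne.symm hu, Ne.symm hv, h w hu hv]

theorem coe_univ_finsuppAntidiag {ι : Type*} [Fintype ι] [DecidableEq ι] (d : ℕ) :
    ((univ.finsuppAntidiag d : Finset (ι →₀ ℕ)) : Set (ι →₀ ℕ)) = {σ | σ.degree = d} := by
  ext σ
  simp [Finsupp.degree_eq_sum]

section MonomialIdeal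

variable {ι k : Type*}

theorem image_monomial_one_add [CommSemiring k] (s t : Set (ι →₀ ℕ)) :
    (monomial · (1 : k)) '' (s + t) = (monomial · (1 : k)) '' s * (monomial · (1 : k)) '' t := by
  rw [← Set.image2_add, ← Set.image2_mul]
  exact Set.image_image2_distrib fun a b => by rw [monomial_mul, one_mul]

theorem span_monomial_restrictScalars_inf_homogeneousSubmodule [CommSemiring k]
    (S : Set (ι →₀ ℕ)) (d : ℕ) :
    Submodule.restrictScalars k (Ideal.span ((monomial · (1 : k)) '' S)) ⊓
        homogeneousSubmodule ι k d
      = restrictSupport k {σ | σ.degree = d ∧ ∃ s ∈ S, s ≤ σ} := by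
  ext f
  simp only [Submodule.mem_inf, Submodule.restrictScalars_mem, mem_ideal_span_monomial_image,
    homogeneousSubmodule_eq_finsupp_supported, ← restrictSupport.eq_1, mem_restrictSupport_iff]
  exact ⟨fun ⟨hS, hd⟩ σ hσ => ⟨hd hσ, hS σ hσ⟩,
    fun h => ⟨fun σ hσ => (h hσ).2, fun σ hσ => (h hσ).1⟩⟩

theorem homogeneousSubmodule_eq_restrictSupport_finsuppAntidiag [CommSemiring k] [Fintype ι]
    [DecidableEq ι] (d : ℕ) :
    homogeneousSubmodule ι k d = restrictSupport k ↑((univ : Finset ι).finsuppAntidiag d) := by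
  rw [homogeneousSubmodule_eq_finsupp_supported, coe_univ_finsuppAntidiag]
  rfl

variable [Field k]

theorem finrank_restrictSupport_finset (s : Finset (ι →₀ ℕ)) :
    finrank k (restrictSupport k (s : Set (ι →₀ ℕ))) = #s := by
  rw [finrank_eq_card_basis (basisRestrictSupport k _)]
  simp

variable [Fintype ι] [DecidableEq ι]

instance (d : ℕ) : FiniteDimensional k (homogeneousSubmodule ι k d) := by
  rw [homogeneousSubmodule_eq_restrictSupport_finsuppAntidiag]
  exact (basisRestrictSupport k _).finiteDimensional_of_finite

theorem finrank_homogeneousSubmodule (d : ℕ) :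
    finrank k (homogeneousSubmodule ι k d) = #((univ : Finset ι).finsuppAntidiag d) := by
  rw [homogeneousSubmodule_eq_restrictSupport_finsuppAntidiag, finrank_restrictSupport_finset]

open Classical in
theorem finrank_span_monomial_inf_homogeneousSubmodule (S : Set (ι →₀ ℕ)) (d : ℕ) :
    finrank k ↥(Submodule.restrictScalars k (Ideal.span ((monomial · (1 : k)) '' S)) ⊓
        homogeneousSubmodule ι k d)
      = #{σ ∈ univ.finsuppAntidiag d | ∃ s ∈ S, s ≤ σ} := by
  have hS : {σ | σ.degree = d ∧ ∃ s ∈ S, s ≤ σ}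
      = ↑{σ ∈ (univ : Finset ι).finsuppAntidiag d | ∃ s ∈ S, s ≤ σ} := by
    ext σ
    simp [Finsupp.degree_eq_sum]
  rw [span_monomial_restrictScalars_inf_homogeneousSubmodule, hS, finrank_restrictSupport_finset]

open Classical in
theorem finrank_map_homogeneousSubmodule_quotient_span_monomial (S : Set (ι →₀ ℕ)) (d : ℕ) :
    finrank k ((homogeneousSubmodule ι k d).map
        (Ideal.Quotient.mkₐ k (Ideal.span ((monomial · (1 : k)) '' S))).toLinearMap)
      = #{σ ∈ univ.finsuppAntidiag d | ¬ ∃ s ∈ S, s ≤ σ} := by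
  have h := LinearMap.finrank_map_add_finrank_ker_inf
    (Ideal.Quotient.mkₐ k (Ideal.span ((monomial · (1 : k)) '' S))).toLinearMap
    (homogeneousSubmodule ι k d)
  rw [Ideal.Quotient.ker_mkₐ_toLinearMap, finrank_span_monomial_inf_homogeneousSubmodule,
    finrank_homogeneousSubmodule,
    ← card_filter_add_card_filter_not (s := univ.finsuppAntidiag d) (fun σ => ∃ s ∈ S, s ≤ σ)] at h
  omega

end MonomialIdeal

section Sundial

variable {n m d : ℕ} {a b : Fin (n + 1)}

def sundialExponents (m : ℕ) (a b : Fin (n + 1)) : Set (Fin (n + 1) →₀ ℕ) :=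
  ((fun i : Fin (n + 1) => Finsupp.single i 1) '' {i | 1 ≤ (i : ℕ) ∧ (i : ℕ) ≤ m + 1} +
      {Finsupp.single a 1, Finsupp.single b 1}) ∪
    (fun i : Fin (n + 1) => Finsupp.single i 1) '' {i | m + 3 ≤ (i : ℕ)}

theorem sundialIdeal_eq_span_monomial (k : Type*) [CommSemiring k] (m : ℕ) (a b : Fin (n + 1)) :
    (Ideal.span (X '' {i : Fin (n + 1) | 1 ≤ (i : ℕ) ∧ (i : ℕ) ≤ m + 1}) * Ideal.span {X a, X b}
        + Ideal.span (X '' {i : Fin (n + 1) | m + 3 ≤ (i : ℕ)})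
        : Ideal (MvPolynomial (Fin (n + 1)) k))
      = Ideal.span ((monomial · (1 : k)) '' sundialExponents m a b) := by
  have hX : ∀ U : Set (Fin (n + 1)), (X '' U : Set (MvPolynomial (Fin (n + 1)) k))
      = (monomial · 1) '' ((fun i => Finsupp.single i 1) '' U) := fun U => by
    rw [Set.image_image]; rfl
  rw [sundialExponents, Set.image_union, Ideal.span_union, image_monomial_one_add, Set.image_pair,
    ← hX, ← hX, ← Ideal.span_mul_span']
  rfl

def IsSundialStandard (m : ℕ) (a b : Fin (n + 1)) (σ : Fin (n + 1) →₀ ℕ) : Prop :=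
  (∀ j : Fin (n + 1), m + 3 ≤ (j : ℕ) → σ j = 0) ∧ σ a ≤ 1 ∧
    (∀ i : Fin (n + 1), 1 ≤ (i : ℕ) → (i : ℕ) ≤ m → σ i = 0 ∨ σ a = 0) ∧
    (∀ i : Fin (n + 1), 1 ≤ (i : ℕ) → (i : ℕ) ≤ m + 1 → σ i = 0 ∨ σ b = 0)

theorem isSundialStandard_iff (ha : (a : ℕ) = m + 1) (hb : (b : ℕ) = m + 2)
    (σ : Fin (n + 1) →₀ ℕ) :
    IsSundialStandard m a b σ ↔ ¬ ∃ s ∈ sundialExponents m a b, s ≤ σ := by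
  simp only [sundialExponents, Set.mem_union, Set.mem_add, Set.mem_image, Set.mem_ofPred_eq,
    Set.mem_insert_iff, Set.mem_singleton_iff]
  constructor
  · rintro ⟨hbig, ha1, hia, hib⟩
      ⟨_, ⟨_, ⟨i, ⟨hi1, hi2⟩, rfl⟩, _, rfl | rfl, rfl⟩ | ⟨j, hj, rfl⟩, hle⟩
    · rcases eq_or_ne i a with rfl | hi
      · rw [← Finsupp.single_add, Finsupp.single_le_iff] at hle
        omega
      · rw [Finsupp.single_add_single_le_iff hi] at hle
        rcases hia i hi1 (by omega) with h | h <;> omega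
    · rw [Finsupp.single_add_single_le_iff (Fin.ne_of_val_ne (by omega))] at hle
      rcases hib i hi1 hi2 with h | h <;> omega
    · rw [Finsupp.single_le_iff] at hle
      have := hbig j hj
      omega
  · intro h
    refine ⟨fun j hj => ?_, ?_, fun i hi1 hi2 => ?_, fun i hi1 hi2 => ?_⟩ <;> by_contra hc <;>
      apply h
    · exact ⟨_, Or.inr ⟨j, hj, rfl⟩, Finsupp.single_le_iff.2 (by omega)⟩
    · refine ⟨_, Or.inl ⟨_, ⟨a, ⟨by omega, by omega⟩, rfl⟩, _, Or.inl rfl, rfl⟩, ?_⟩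
      rw [← Finsupp.single_add, Finsupp.single_le_iff]
      omega
    · refine ⟨_, Or.inl ⟨_, ⟨i, ⟨hi1, by omega⟩, rfl⟩, _, Or.inl rfl, rfl⟩, ?_⟩
      rw [Finsupp.single_add_single_le_iff (Fin.ne_of_val_ne (by omega))]
      omega
    · refine ⟨_, Or.inl ⟨_, ⟨i, ⟨hi1, hi2⟩, rfl⟩, _, Or.inr rfl, rfl⟩, ?_⟩
      rw [Finsupp.single_add_single_le_iff (Fin.ne_of_val_ne (by omega))]
      omega

noncomputable def sundialStandardMonomials (d : ℕ) (a b : Fin (n + 1)) :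
    Finset (Fin (n + 1) →₀ ℕ) :=
  (Iio a).finsuppAntidiag d ∪ {Finsupp.single 0 (d - 1) + Finsupp.single a 1} ∪
    (Icc 1 d).image fun j => Finsupp.single 0 (d - j) + Finsupp.single b j

theorem degree_eq_and_isSundialStandard_of_mem (hd : 1 ≤ d) (ha : (a : ℕ) = m + 1)
    (hb : (b : ℕ) = m + 2) {σ : Fin (n + 1) →₀ ℕ} (hσ : σ ∈ sundialStandardMonomials d a b) :
    σ.degree = d ∧ IsSundialStandard m a b σ := by
  simp only [sundialStandardMonomials, mem_union, mem_singleton, mem_image, mem_Icc,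
    mem_finsuppAntidiag'] at hσ
  rcases hσ with (⟨hdeg, hsupp⟩ | rfl) | ⟨j, ⟨hj1, hjd⟩, rfl⟩
  · have hz : ∀ w, a ≤ w → σ w = 0 := fun w hw =>
      Finsupp.notMem_support_iff.1 fun h => (mem_Iio.1 (hsupp h)).not_ge hw
    exact ⟨hdeg, fun j hj => hz j (by omega), by rw [hz a le_rfl]; omega,
      fun i _ _ => Or.inr (hz a le_rfl), fun i _ _ => Or.inr (hz b (by omega))⟩
  all_goals
    refine ⟨by simp only [map_add, Finsupp.degree_single]; omega, ?_, ?_, ?_, ?_⟩ <;>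
      simp only [Finsupp.add_apply, Finsupp.single_apply, Fin.ext_iff, Fin.val_zero] <;>
      intros <;> split_ifs <;> omega

theorem IsSundialStandard.mem_sundialStandardMonomials (ha : (a : ℕ) = m + 1)
    (hb : (b : ℕ) = m + 2) {σ : Fin (n + 1) →₀ ℕ} (hdeg : σ.degree = d)
    (hσ : IsSundialStandard m a b σ) : σ ∈ sundialStandardMonomials d a b := by
  obtain ⟨hbig, ha1, hia, hib⟩ := hσ
  have h0a : (0 : Fin (n + 1)) ≠ a := Fin.ne_of_val_ne (by simp; omega)
  have h0b : (0 : Fin (n + 1)) ≠ b := Fin.ne_of_val_ne (by simp; omega)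
  have hcases : ∀ w : Fin (n + 1),
      w = 0 ∨ (1 ≤ (w : ℕ) ∧ (w : ℕ) ≤ m) ∨ w = a ∨ w = b ∨ m + 3 ≤ (w : ℕ) := fun w => by
    simp only [Fin.ext_iff, Fin.val_zero]
    omega
  simp only [sundialStandardMonomials, mem_union, mem_singleton, mem_image, mem_Icc,
    mem_finsuppAntidiag']
  rcases Nat.eq_zero_or_pos (σ a) with hσa | hσa
  · rcases Nat.eq_zero_or_pos (σ b) with hσb | hσb
    · refine Or.inl (Or.inl ⟨hdeg, fun w hw => mem_Iio.2 ?_⟩)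
      have hw0 : σ w ≠ 0 := Finsupp.mem_support_iff.1 hw
      rcases hcases w with rfl | h | rfl | rfl | h
      · exact Fin.pos_iff_ne_zero.2 h0a.symm
      · exact Fin.lt_def.2 (by omega)
      · exact absurd hσa hw0
      · exact absurd hσb hw0
      · exact absurd (hbig w h) hw0
    · have hσ := Finsupp.eq_single_add_single h0b (σ := σ) fun w h0 hb' => by
        rcases hcases w with rfl | h | rfl | rfl | h
        exacts [absurd rfl h0, (hib w h.1 (by omega)).resolve_right hσb.ne', hσa,
          absurd rfl hb', hbig w h]
      rw [hσ, map_add, Finsupp.degree_single, Finsupp.degree_single] at hdeg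
      refine Or.inr ⟨σ b, ⟨hσb, by omega⟩, ?_⟩
      rw [show d - σ b = σ 0 by omega, ← hσ]
  · have hσb : σ b = 0 := (hib a (by omega) (by omega)).resolve_left hσa.ne'
    have hσ := Finsupp.eq_single_add_single h0a (σ := σ) fun w h0 ha' => by
      rcases hcases w with rfl | h | rfl | rfl | h
      exacts [absurd rfl h0, (hia w h.1 h.2).resolve_right hσa.ne', absurd rfl ha', hσb,
        hbig w h]
    rw [hσ, map_add, Finsupp.degree_single, Finsupp.degree_single] at hdeg
    rw [show σ a = 1 by omega] at hσ hdeg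
    refine Or.inl (Or.inr ?_)
    rwa [show d - 1 = σ 0 by omega]

theorem card_sundialStandardMonomials (ha : (a : ℕ) = m + 1) (hb : (b : ℕ) = m + 2) :
    #(sundialStandardMonomials d a b) = (d + m).choose m + d + 1 := by
  have h0b : (0 : Fin (n + 1)) ≠ b := Fin.ne_of_val_ne (by simp; omega)
  have hba : b ≠ a := Fin.ne_of_val_ne (by omega)
  have h0a : (0 : Fin (n + 1)) ≠ a := Fin.ne_of_val_ne (by simp; omega)
  have hA : ∀ σ ∈ (Iio a).finsuppAntidiag d, σ a = 0 ∧ σ b = 0 := fun σ hσ => by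
    have hsupp := (mem_finsuppAntidiag.1 hσ).2
    exact ⟨Finsupp.notMem_support_iff.1 fun h => (mem_Iio.1 (hsupp h)).false,
      Finsupp.notMem_support_iff.1 fun h => by have := Fin.lt_def.1 (mem_Iio.1 (hsupp h)); omega⟩
  have hinj : Function.Injective fun j =>
      Finsupp.single (0 : Fin (n + 1)) (d - j) + Finsupp.single b j :=
    fun i j h => by simpa [h0b] using DFunLike.congr_fun h b
  rw [sundialStandardMonomials, card_union_of_disjoint, card_union_of_disjoint,
    card_finsuppAntidiag_nat_eq_choose, Fin.card_Iio, ha, card_singleton,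
    card_image_of_injective _ hinj, Nat.card_Icc, show m + 1 + d - 1 = d + m by omega,
    Nat.choose_symm_add]
  · omega
  · refine disjoint_left.2 fun σ hσ hσ' => ?_
    have hσa := (hA σ hσ).1
    simp [mem_singleton.1 hσ', h0a] at hσa
  · refine disjoint_left.2 fun σ hσ hσ' => ?_
    have hσb : σ b = 0 := by
      rcases mem_union.1 hσ with h | h
      · exact (hA _ h).2
      · simp [mem_singleton.1 h, h0b, hba]
    obtain ⟨j, hj, rfl⟩ := mem_image.1 hσ'
    simp [h0b] at hσb
    exact (mem_Icc.1 hj).1.not_gt (by omega)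

open Classical in
theorem filter_not_exists_sundialExponents_le (hd : 1 ≤ d) (ha : (a : ℕ) = m + 1)
    (hb : (b : ℕ) = m + 2) :
    {σ ∈ (univ : Finset (Fin (n + 1))).finsuppAntidiag d |
        ¬ ∃ s ∈ sundialExponents m a b, s ≤ σ} = sundialStandardMonomials d a b := by
  ext σ
  rw [mem_filter, ← isSundialStandard_iff ha hb, ← mem_coe, coe_univ_finsuppAntidiag,
    Set.mem_ofPred_eq]
  exact ⟨fun ⟨hdeg, hσ⟩ => hσ.mem_sundialStandardMonomials ha hb hdeg,
    degree_eq_and_isSundialStandard_of_mem hd ha hb⟩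

end Sundial

/-- The `(m+2)`-dimensional sundial imposes `C(d+m,m) + d + 1` conditions on the
forms of each degree `d ≥ 1`. -/
theorem stmt7 (k : Type) [Field k] (n m d : ℕ) (hn : m + 2 ≤ n)
    (hd : 1 ≤ d)
    (I : Ideal (MvPolynomial (Fin (n+1)) k))
    (hI : I = (Ideal.span
          (MvPolynomial.X '' {i : Fin (n+1) | 1 ≤ (i : ℕ) ∧ (i : ℕ) ≤ m + 1})
            : Ideal (MvPolynomial (Fin (n+1)) k))
          * Ideal.span {MvPolynomial.X (⟨m+1, by omega⟩ : Fin (n+1)),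
              MvPolynomial.X (⟨m+2, by omega⟩ : Fin (n+1))}
        + Ideal.span (MvPolynomial.X '' {i : Fin (n+1) | m + 3 ≤ (i : ℕ)})) :
    Module.finrank k
        ↥((MvPolynomial.homogeneousSubmodule (Fin (n+1)) k d).map
          (Ideal.Quotient.mkₐ k I).toLinearMap)
      = (d+m).choose m + d + 1 ∧
    (hdim k (n+1) I d : ℤ)
      = ((d+n).choose n : ℤ) - ((d+m).choose m : ℤ) - (d+1) := by
  have hquot : finrank k ((homogeneousSubmodule (Fin (n + 1)) k d).map
      (Ideal.Quotient.mkₐ k I).toLinearMap) = (d + m).choose m + d + 1 := by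
    rw [hI, sundialIdeal_eq_span_monomial, finrank_map_homogeneousSubmodule_quotient_span_monomial,
      filter_not_exists_sundialExponents_le hd rfl rfl, card_sundialStandardMonomials rfl rfl]
  have hrank := LinearMap.finrank_map_add_finrank_ker_inf (Ideal.Quotient.mkₐ k I).toLinearMap
    (homogeneousSubmodule (Fin (n + 1)) k d)
  rw [Ideal.Quotient.ker_mkₐ_toLinearMap, finrank_homogeneousSubmodule,
    card_finsuppAntidiag_nat_eq_choose, card_univ, Fintype.card_fin,
    show n + 1 + d - 1 = d + n by omega, Nat.choose_symm_add] at hrank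
  refine ⟨hquot, ?_⟩
  rw [hdim]
  omega
end
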